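/- Let (c_2, c_4) ∈ ℂ² ∖ {(0,0)}. The SL(2,ℤ)-orbit S := {(a·c_2 + b·c_4, c·c_2 + d·c_4) : [[a,b],[c,d]] ∈ SL(2,ℤ)} has an accumulation point in ℂ² if and only if Im(c_2·conj(c_4)) = 0, c_4 ≠ 0 and c_2/c_4 is irrational. In particular, if Im(c_2·conj(c_4)) ≠ 0 then S is a discrete subset of ℂ² with no accumulation point. -/

import Mathlib

open Complex Filter

/-- The `SL(2,ℤ)`-orbit of `(c₂, c₄) ∈ ℂ²`. -/
def SL2ZOrbit (c₂ c₄ : ℂ) : Set (ℂ × ℂ) :=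
  {y | ∃ A : Matrix (Fin 2) (Fin 2) ℤ, A.det = 1 ∧
    y = ((A 0 0 : ℂ) * c₂ + (A 0 1 : ℂ) * c₄, (A 1 0 : ℂ) * c₂ + (A 1 1 : ℂ) * c₄)}

/-! The orbit lies in `L × L`, where `L = ℤ c₂ + ℤ c₄`. If the nonzero elements of `L` have norm
bounded below by some `ε > 0`, the orbit is `ε`-separated and has no accumulation point. This
happens when `c₂, c₄` are `ℝ`-independent (then `|Im(c₂ c̄₄)| ≤ ‖a c₂ + b c₄‖ (‖c₂‖ + ‖c₄‖)` for
`(a, b) ≠ 0`) and when they are commensurable (then `L` is cyclic). In the remaining case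
`c₂ = α c₄` with `α` irrational, Dirichlet's theorem gives a coprime pair `(c, d)` with `c α + d`
nonzero and arbitrarily small; completing `(c, d)` to a matrix of `SL(2,ℤ)` whose first row is
reduced modulo `(c, d)` gives nonzero orbit points arbitrarily close to `0`. -/

open ComplexConjugate

theorem not_accPt_of_pairwise_le_dist {X : Type*} [MetricSpace X] {s : Set X} {ε : ℝ}
    (hε : 0 < ε) (hs : s.Pairwise fun x y => ε ≤ dist x y) (p : X) : ¬AccPt p (𝓟 s) := by
  have hdisc : IsDiscrete s :=
    ⟨DiscreteTopology.of_forall_le_dist hε fun x y hxy => hs x.2 y.2 (Subtype.coe_ne_coe.2 hxy)⟩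
  exact fun hp => hp.ne <| disjoint_iff.1 <|
    isClosed_and_discrete_iff.1 ⟨Metric.isClosed_of_pairwise_le_dist hε hs, hdisc⟩ p

theorem AddSubgroup.pairwise_le_dist {E : Type*} [SeminormedAddCommGroup E] {L : AddSubgroup E}
    {ε : ℝ} (hL : ∀ x ∈ L, x ≠ 0 → ε ≤ ‖x‖) : (L : Set E).Pairwise fun x y => ε ≤ dist x y :=
  fun x hx y hy hxy => (hL _ (L.sub_mem hx hy) (sub_ne_zero.2 hxy)).trans_eq (dist_eq_norm x y).symm

theorem AddSubgroup.le_norm_of_mem_prod {E F : Type*} [SeminormedAddCommGroup E]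
    [SeminormedAddCommGroup F] {L : AddSubgroup E} {M : AddSubgroup F} {ε : ℝ}
    (hL : ∀ x ∈ L, x ≠ 0 → ε ≤ ‖x‖) (hM : ∀ y ∈ M, y ≠ 0 → ε ≤ ‖y‖) :
    ∀ z ∈ L.prod M, z ≠ 0 → ε ≤ ‖z‖ := by
  rintro ⟨x, y⟩ ⟨hx, hy⟩ hz
  by_cases hx0 : x = 0
  · exact (hM y hy fun hy0 => hz (by simp [hx0, hy0])).trans (norm_snd_le (x, y))
  · exact (hL x hx hx0).trans (norm_fst_le (x, y))

theorem le_norm_of_mem_zmultiples {E : Type*} [SeminormedAddCommGroup E] [NormedSpace ℝ E]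
    {g x : E} (hx : x ∈ AddSubgroup.zmultiples g) (hx0 : x ≠ 0) : ‖g‖ ≤ ‖x‖ := by
  obtain ⟨n, rfl⟩ := AddSubgroup.mem_zmultiples_iff.1 hx
  have hn : n ≠ 0 := by rintro rfl; simp at hx0
  rw [norm_zsmul ℝ, Real.norm_eq_abs]
  exact le_mul_of_one_le_left (norm_nonneg g) (by exact_mod_cast Int.one_le_abs hn)

theorem accPt_zero_of_forall_exists_norm_lt {E : Type*} [SeminormedAddCommGroup E] {s : Set E}
    (h : ∀ ε > 0, ∃ x ∈ s, x ≠ 0 ∧ ‖x‖ < ε) : AccPt 0 (𝓟 s) := by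
  rw [accPt_iff_frequently, Metric.nhds_basis_ball.frequently_iff]
  intro ε hε
  obtain ⟨x, hxs, hx0, hxε⟩ := h ε hε
  exact ⟨x, mem_ball_zero_iff.2 hxε, hx0, hxs⟩

theorem Irrational.exists_isCoprime_abs_mul_add_lt {α ε : ℝ} (hα : Irrational α) (hε : 0 < ε) :
    ∃ c d : ℤ, IsCoprime c d ∧ c * α + d ≠ 0 ∧ |c * α + d| < ε := by
  obtain ⟨n, hn⟩ := exists_nat_one_div_lt hε
  obtain ⟨q, hq, -⟩ := Real.exists_rat_abs_sub_le_and_den_le α n.succ_pos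
  have hden : (0 : ℝ) < q.den := by exact_mod_cast q.pos
  have hq' : (q.den : ℤ) * α + (-q.num : ℤ) = q.den * (α - q) := by
    rw [Rat.cast_def]; push_cast; field_simp; ring
  refine ⟨q.den, -q.num, ?_, ?_, ?_⟩
  · rw [Int.isCoprime_iff_gcd_eq_one, Int.gcd_neg, Int.gcd_comm]
    exact q.reduced
  · rw [hq']
    exact mul_ne_zero hden.ne' (sub_ne_zero.2 (hα.ne_rat q))
  · rw [hq', abs_mul, abs_of_pos hden]
    calc (q.den : ℝ) * |α - q| ≤ q.den * (1 / ((n.succ + 1) * q.den)) := by gcongr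
      _ = 1 / (n.succ + 1) := by field_simp
      _ < 1 / (n + 1) := by gcongr; linarith
      _ < ε := hn

theorem IsCoprime.exists_det_eq_one_abs_mul_add_lt {α : ℝ} {c d : ℤ} (hcd : IsCoprime c d)
    (hδ : c * α + d ≠ 0) :
    ∃ a b : ℤ, a * d - b * c = 1 ∧ |a * α + b| < |c * α + d| := by
  obtain ⟨u, v, huv⟩ := hcd
  set t := ⌊(v * α - u) / (c * α + d)⌋
  refine ⟨v - t * c, -u - t * d, by linear_combination huv, ?_⟩
  have h : ((v - t * c : ℤ) : ℝ) * α + ((-u - t * d : ℤ) : ℝ) =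
      (c * α + d) * Int.fract ((v * α - u) / (c * α + d)) := by
    rw [Int.fract, mul_sub, mul_div_cancel₀ _ hδ]; push_cast; ring
  rw [h, abs_mul, Int.abs_fract]
  exact mul_lt_of_lt_one_right (abs_pos.2 hδ) (Int.fract_lt_one _)

theorem SL2ZOrbit_subset_prod_closure (c₂ c₄ : ℂ) :
    SL2ZOrbit c₂ c₄ ⊆ (AddSubgroup.closure {c₂, c₄}).prod (AddSubgroup.closure {c₂, c₄}) := by
  have hmem : ∀ m n : ℤ, (m : ℂ) * c₂ + n * c₄ ∈ AddSubgroup.closure {c₂, c₄} := fun m n =>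
    AddSubgroup.mem_closure_pair.2 ⟨m, n, by simp only [zsmul_eq_mul]⟩
  rintro _ ⟨A, -, rfl⟩
  exact ⟨hmem _ _, hmem _ _⟩

theorem not_accPt_SL2ZOrbit_of_le_norm {c₂ c₄ : ℂ} {ε : ℝ} (hε : 0 < ε)
    (h : ∀ x ∈ AddSubgroup.closure {c₂, c₄}, x ≠ 0 → ε ≤ ‖x‖) (p : ℂ × ℂ) :
    ¬AccPt p (𝓟 (SL2ZOrbit c₂ c₄)) := fun hp =>
  not_accPt_of_pairwise_le_dist hε
    (AddSubgroup.pairwise_le_dist (AddSubgroup.le_norm_of_mem_prod h h)) p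
    (hp.mono (principal_mono.2 (SL2ZOrbit_subset_prod_closure c₂ c₄)))

theorem not_accPt_SL2ZOrbit_of_mem_zmultiples {c₂ c₄ g : ℂ} (hg : g ≠ 0)
    (h₂ : c₂ ∈ AddSubgroup.zmultiples g) (h₄ : c₄ ∈ AddSubgroup.zmultiples g) (p : ℂ × ℂ) :
    ¬AccPt p (𝓟 (SL2ZOrbit c₂ c₄)) := by
  have hle : AddSubgroup.closure {c₂, c₄} ≤ AddSubgroup.zmultiples g := by
    rw [AddSubgroup.closure_le]
    exact Set.insert_subset h₂ (Set.singleton_subset_iff.2 h₄)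
  exact not_accPt_SL2ZOrbit_of_le_norm (norm_pos_iff.2 hg)
    (fun x hx => le_norm_of_mem_zmultiples (hle hx)) p

theorem not_accPt_SL2ZOrbit_of_div_eq_ratCast {c₂ c₄ : ℂ} (hc₄ : c₄ ≠ 0) {q : ℚ}
    (hq : c₂ / c₄ = q) (p : ℂ × ℂ) : ¬AccPt p (𝓟 (SL2ZOrbit c₂ c₄)) := by
  have hden : (q.den : ℂ) ≠ 0 := Nat.cast_ne_zero.2 q.den_ne_zero
  refine not_accPt_SL2ZOrbit_of_mem_zmultiples (g := c₄ / q.den) (div_ne_zero hc₄ hden)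
    ⟨q.num, ?_⟩ ⟨q.den, ?_⟩ p
  · rw [div_eq_iff hc₄, Rat.cast_def] at hq
    simp only [zsmul_eq_mul, hq]
    ring
  · simp only [zsmul_eq_mul, Int.cast_natCast]
    field_simp

theorem abs_im_mul_conj_le (c₂ c₄ : ℂ) {a b : ℤ} (hab : a ≠ 0 ∨ b ≠ 0) :
    |(c₂ * conj c₄).im| ≤ ‖a • c₂ + b • c₄‖ * (‖c₂‖ + ‖c₄‖) := by
  set x := a • c₂ + b • c₄
  set I := (c₂ * conj c₄).im
  have h₄ : (x * conj c₄).im = a * I := by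
    simp only [x, I, zsmul_eq_mul, mul_im, add_re, add_im, mul_re, intCast_re, intCast_im, conj_re,
      conj_im]
    ring
  have h₂ : (x * conj c₂).im = -(b * I) := by
    simp only [x, I, zsmul_eq_mul, mul_im, add_re, add_im, mul_re, intCast_re, intCast_im, conj_re,
      conj_im]
    ring
  have hle : ∀ z w : ℂ, |(z * conj w).im| ≤ ‖z‖ * ‖w‖ := fun z w =>
    (abs_im_le_norm _).trans_eq (by rw [norm_mul, norm_conj])
  have hab1 : (1 : ℝ) ≤ |(a : ℝ)| + |(b : ℝ)| := by
    have : (1 : ℤ) ≤ |a| + |b| := by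
      rcases hab with ha | hb
      · linarith [Int.one_le_abs ha, abs_nonneg b]
      · linarith [Int.one_le_abs hb, abs_nonneg a]
    exact_mod_cast this
  calc |I| ≤ (|(a : ℝ)| + |(b : ℝ)|) * |I| := le_mul_of_one_le_left (abs_nonneg I) hab1
    _ = |(x * conj c₄).im| + |(x * conj c₂).im| := by rw [h₄, h₂, abs_neg, abs_mul, abs_mul]; ring
    _ ≤ ‖x‖ * ‖c₄‖ + ‖x‖ * ‖c₂‖ := add_le_add (hle x c₄) (hle x c₂)
    _ = ‖x‖ * (‖c₂‖ + ‖c₄‖) := by ring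

theorem not_accPt_SL2ZOrbit_of_im_ne_zero {c₂ c₄ : ℂ} (hI : (c₂ * conj c₄).im ≠ 0)
    (p : ℂ × ℂ) : ¬AccPt p (𝓟 (SL2ZOrbit c₂ c₄)) := by
  have hc₄ : c₄ ≠ 0 := by rintro rfl; simp at hI
  have hpos : 0 < ‖c₂‖ + ‖c₄‖ := add_pos_of_nonneg_of_pos (norm_nonneg _) (norm_pos_iff.2 hc₄)
  refine not_accPt_SL2ZOrbit_of_le_norm (div_pos (abs_pos.2 hI) hpos) (fun x hx hx0 => ?_) p
  obtain ⟨a, b, rfl⟩ := AddSubgroup.mem_closure_pair.1 hx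
  rw [div_le_iff₀ hpos]
  refine abs_im_mul_conj_le c₂ c₄ (not_and_or.1 fun ⟨ha, hb⟩ => hx0 ?_)
  rw [ha, hb, zero_zsmul, zero_zsmul, add_zero]

theorem accPt_zero_SL2ZOrbit_ofReal_mul {α : ℝ} (hα : Irrational α) {c₄ : ℂ} (hc₄ : c₄ ≠ 0) :
    AccPt 0 (𝓟 (SL2ZOrbit (α * c₄) c₄)) := by
  have hnorm : 0 < ‖c₄‖ := norm_pos_iff.2 hc₄
  refine accPt_zero_of_forall_exists_norm_lt fun ε hε => ?_
  obtain ⟨c, d, hcd, hne, hlt⟩ := hα.exists_isCoprime_abs_mul_add_lt (div_pos hε hnorm)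
  obtain ⟨a, b, hdet, hab⟩ := hcd.exists_det_eq_one_abs_mul_add_lt hne
  have hcoord : ∀ m n : ℤ, (m : ℂ) * (α * c₄) + n * c₄ = ((m * α + n : ℝ) : ℂ) * c₄ := by
    intro m n; push_cast; ring
  have hsmall : ∀ m n : ℤ, |m * α + n| < ε / ‖c₄‖ → ‖(m : ℂ) * (α * c₄) + n * c₄‖ < ε := by
    intro m n h
    rwa [hcoord, norm_mul, norm_real, Real.norm_eq_abs, ← lt_div_iff₀ hnorm]
  refine ⟨(a * (α * c₄) + b * c₄, c * (α * c₄) + d * c₄), ⟨!![a, b; c, d], ?_, ?_⟩, ?_, ?_⟩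
  · simp [Matrix.det_fin_two_of, hdet]
  · simp
  · intro h
    have h₂ : (c : ℂ) * (α * c₄) + d * c₄ = 0 := congrArg Prod.snd h
    rw [hcoord, mul_eq_zero, ofReal_eq_zero] at h₂
    exact hne (h₂.resolve_right hc₄)
  · exact max_lt (hsmall a b (hab.trans hlt)) (hsmall c d hlt)

theorem ofReal_re_div_of_im_mul_conj_eq_zero {c₂ c₄ : ℂ} (hI : (c₂ * conj c₄).im = 0) :
    (((c₂ / c₄).re : ℝ) : ℂ) = c₂ / c₄ := by
  have him : (c₂ / c₄).im = 0 := by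
    rw [div_im, ← sub_div, div_eq_zero_iff]
    left
    simp only [mul_im, conj_re, conj_im] at hI
    linarith
  exact Complex.ext (ofReal_re _) (by rw [ofReal_im, him])

/-- for `(c₂,c₄) ≠ (0,0)`, the `SL(2,ℤ)`-orbit of `(c₂,c₄)` has an
accumulation point in `ℂ²` iff `Im(c₂ c̄₄) = 0`, `c₄ ≠ 0` and `c₂/c₄` is irrational;
in particular if `Im(c₂ c̄₄) ≠ 0` the orbit has no accumulation point. -/
theorem SL2ZOrbit_accumulation (c₂ c₄ : ℂ) (hc : (c₂, c₄) ≠ (0, 0)) :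
    ((∃ p : ℂ × ℂ, AccPt p (Filter.principal (SL2ZOrbit c₂ c₄))) ↔
      ((c₂ * (starRingEnd ℂ) c₄).im = 0 ∧ c₄ ≠ 0 ∧ ¬ ∃ q : ℚ, c₂ / c₄ = (q : ℂ))) ∧
    ((c₂ * (starRingEnd ℂ) c₄).im ≠ 0 →
      ¬ ∃ p : ℂ × ℂ, AccPt p (Filter.principal (SL2ZOrbit c₂ c₄))) := by
  have hno_acc : (c₂ * conj c₄).im ≠ 0 → ¬∃ p, AccPt p (𝓟 (SL2ZOrbit c₂ c₄)) :=
    fun hI ⟨p, hp⟩ => not_accPt_SL2ZOrbit_of_im_ne_zero hI p hp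
  refine ⟨⟨fun ⟨p, hp⟩ => ?_, fun ⟨hI, hc₄, hrat⟩ => ?_⟩, hno_acc⟩
  · have hc₄ : c₄ ≠ 0 := by
      rintro rfl
      have hc₂ : c₂ ≠ 0 := fun h => hc (by rw [h])
      exact not_accPt_SL2ZOrbit_of_mem_zmultiples hc₂ (AddSubgroup.mem_zmultiples c₂)
        (zero_mem _) p hp
    exact ⟨not_not.1 fun hI => hno_acc hI ⟨p, hp⟩, hc₄,
      fun ⟨q, hq⟩ => not_accPt_SL2ZOrbit_of_div_eq_ratCast hc₄ hq p hp⟩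
  · have hα := ofReal_re_div_of_im_mul_conj_eq_zero hI
    have hirr : Irrational (c₂ / c₄).re :=
      fun ⟨q, hq⟩ => hrat ⟨q, by rw [← hα, ← hq, ofReal_ratCast]⟩
    have hc₂ : c₂ = (c₂ / c₄).re * c₄ := by rw [hα, div_mul_cancel₀ _ hc₄]
    exact ⟨0, hc₂ ▸ accPt_zero_SL2ZOrbit_ofReal_mul hirr hc₄⟩
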